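/- arXiv:0909.4184 — 4 statements merged into one kernel-verified Lean document; each statement's English description precedes it below -/
import Mathlib

section
/- For nonnegative integers n ≤ m, the element X + Y is a strong Lefschetz element for the ring ℝ[X,Y]/(X^{n+1}, Y^{m+1}); that is, for each i with 0 ≤ i ≤ ⌊(n+m)/2⌋, multiplication by (X+Y)^{n+m-2i} is a linear isomorphism from the degree-i component to the degree-(n+m-i) component. -/
/-!
Setting `Y = 1` identifies homogeneous forms of degree `D` in `K[X, Y]` with polynomials of
degree `≤ D` (`Polynomial.homogenize` is the inverse), and a form lies in
`(X ^ (n + 1), Y ^ (m + 1))` iff its dehomogenization has no coefficients in the window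
`[D - m, n]`. Multiplication by `(X + Y) ^ s` becomes multiplication by `(X + 1) ^ s`, so both
claims reduce to: if `deg p ≤ r` and the coefficients of `(X + 1) ^ s * p` vanish on the window
`[e, e + r]` with `e ≤ s`, then `p = 0` (and, counting dimensions, any prescribed values on the
window are attained). Here `s = n + m - 2 * i` and, as `i ≤ m`, the window is `[n - i, n]`.
For `e = 0` this holds because `X ^ (r + 1)` is coprime to `(X + 1) ^ s`.
For `e > 0`, differentiating shifts the window down by one and keeps the shape
`(X + 1) ^ (s - 1) * q` with `deg q ≤ r`, so by induction the derivative vanishes; but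
`(X + 1) ^ s * p` is constant only if `p = 0`.
-/

open MvPolynomial

namespace Polynomial

theorem natDegree_X_add_one {R : Type*} [Semiring R] [Nontrivial R] :
    (X + 1 : R[X]).natDegree = 1 :=
  natDegree_X_add_C 1

theorem isCoprime_X_pow_X_add_one_pow {R : Type*} [CommRing R] (k s : ℕ) :
    IsCoprime (X ^ k : R[X]) ((X + 1) ^ s) :=
  IsCoprime.pow ⟨-1, 1, by ring⟩

theorem natDegree_le_of_mem_degreeLT {R : Type*} [Semiring R] {r : ℕ} {p : R[X]}
    (hp : p ∈ degreeLT R (r + 1)) : p.natDegree ≤ r := by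
  rw [degreeLT_succ_eq_degreeLE, mem_degreeLE] at hp
  exact natDegree_le_iff_degree_le.mpr hp

section CharZero

variable {K : Type*} [Field K] [CharZero K]

theorem natDegree_X_add_one_mul_derivative_le (p : K[X]) :
    ((X + 1) * derivative p).natDegree ≤ p.natDegree := by
  rcases eq_or_ne p.natDegree 0 with hp | hp
  · simp [derivative_eq_zero.mpr hp]
  · calc ((X + 1) * derivative p).natDegree ≤ 1 + (derivative p).natDegree :=
          natDegree_mul_le.trans (by rw [natDegree_X_add_one])
      _ ≤ p.natDegree := by rw [natDegree_derivative]; omega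

theorem eq_zero_of_coeff_X_add_one_pow_mul_eq_zero {r e s : ℕ} (hes : e ≤ s) {p : K[X]}
    (hp : p.natDegree ≤ r)
    (hwin : ∀ b, e ≤ b → b ≤ e + r → ((X + 1) ^ s * p).coeff b = 0) : p = 0 := by
  induction e generalizing s p with
  | zero =>
    have hdvd : X ^ (r + 1) ∣ (X + 1) ^ s * p :=
      X_pow_dvd_iff.mpr fun d hd => hwin d d.zero_le (by omega)
    exact eq_zero_of_dvd_of_natDegree_lt
      ((isCoprime_X_pow_X_add_one_pow _ _).dvd_of_dvd_mul_left hdvd)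
      (by rw [natDegree_X_pow]; omega)
  | succ e ih =>
    obtain ⟨s, rfl⟩ : ∃ s', s = s' + 1 := ⟨s - 1, by omega⟩
    have hderiv : derivative ((X + 1) ^ (s + 1) * p) =
        (X + 1) ^ s * (C ((s + 1 : ℕ) : K) * p + (X + 1) * derivative p) := by
      simp only [derivative_mul, derivative_pow, derivative_add, derivative_X, derivative_one,
        map_natCast, Nat.add_sub_cancel]
      push_cast
      ring
    have hq := ih (s := s) (by omega)
      ((natDegree_add_le _ _).trans (max_le ((natDegree_C_mul_le _ _).trans hp)
        ((natDegree_X_add_one_mul_derivative_le p).trans hp)))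
      fun b hb₁ hb₂ => by
        rw [← hderiv, coeff_derivative, hwin (b + 1) (by omega) (by omega), zero_mul]
    rw [hq, mul_zero, derivative_eq_zero] at hderiv
    by_contra hp0
    have hX : (X + 1 : K[X]) ≠ 0 := X_add_C_ne_zero 1
    rw [natDegree_mul (pow_ne_zero _ hX) hp0, natDegree_pow, natDegree_X_add_one] at hderiv
    omega

theorem exists_natDegree_le_coeff_X_add_one_pow_mul_eq {r e s : ℕ} (hes : e ≤ s)
    (q : K[X]) : ∃ p : K[X], p.natDegree ≤ r ∧
      ∀ b, e ≤ b → b ≤ e + r → ((X + 1) ^ s * p).coeff b = q.coeff b := by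
  let T : degreeLT K (r + 1) →ₗ[K] Fin (r + 1) → K := LinearMap.pi fun j =>
    lcoeff K (e + j) ∘ₗ LinearMap.mulLeft K ((X + 1) ^ s) ∘ₗ (degreeLT K (r + 1)).subtype
  have : FiniteDimensional K (degreeLT K (r + 1)) :=
    (degreeLTEquiv K (r + 1)).symm.finiteDimensional
  have hT : Function.Injective T := by
    refine injective_iff_map_eq_zero T |>.mpr fun ⟨p, hp⟩ hTp => Subtype.ext ?_
    refine eq_zero_of_coeff_X_add_one_pow_mul_eq_zero hes (natDegree_le_of_mem_degreeLT hp)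
      fun b hb₁ hb₂ => ?_
    simpa [T, show e + (b - e) = b by omega] using congr_fun hTp ⟨b - e, by omega⟩
  obtain ⟨⟨p, hp⟩, hTp⟩ := (LinearMap.injective_iff_surjective_of_finrank_eq_finrank
    (degreeLTEquiv K (r + 1)).finrank_eq).mp hT fun j => q.coeff (e + j)
  refine ⟨p, natDegree_le_of_mem_degreeLT hp, fun b hb₁ hb₂ => ?_⟩
  simpa [T, show e + (b - e) = b by omega] using congr_fun hTp ⟨b - e, by omega⟩

end CharZero

section Homogenize

variable {R : Type*} [CommSemiring R]

theorem _root_.MvPolynomial.IsHomogeneous.natDegree_aeval_X_one_le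
    {f : MvPolynomial (Fin 2) R} {D : ℕ} (hf : f.IsHomogeneous D) :
    (MvPolynomial.aeval ![(X : R[X]), 1] f).natDegree ≤ D := by
  rw [f.as_sum, map_sum]
  refine natDegree_sum_le_of_forall_le _ _ fun v hv => ?_
  have hv : v 0 + v 1 = D := by
    simpa [Finsupp.weight_apply, Finsupp.sum_fintype] using
      hf (MvPolynomial.mem_support_iff.mp hv)
  rw [MvPolynomial.aeval_monomial, Finsupp.prod_fintype _ _ (by simp), Fin.prod_univ_two]
  simp only [Matrix.cons_val_zero, Matrix.cons_val_one, one_pow, mul_one, ← C_eq_algebraMap]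
  exact (natDegree_C_mul_X_pow_le _ _).trans (by omega)

theorem _root_.MvPolynomial.IsHomogeneous.exists_homogenize_eq {f : MvPolynomial (Fin 2) R}
    {D : ℕ} (hf : f.IsHomogeneous D) : ∃ p : R[X], p.natDegree ≤ D ∧ p.homogenize D = f :=
  ⟨_, hf.natDegree_aeval_X_one_le, homogenize_eq_of_isHomogeneous hf rfl⟩

theorem _root_.MvPolynomial.isHomogeneous_X_add_X_pow (s : ℕ) :
    ((.X 0 + .X 1 : MvPolynomial (Fin 2) R) ^ s).IsHomogeneous s := by
  simpa using ((isHomogeneous_X R 0).add (isHomogeneous_X R 1)).pow s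

theorem homogenize_X_add_one_pow_mul {p : R[X]} {i : ℕ} (hp : p.natDegree ≤ i) (s : ℕ) :
    ((X + 1) ^ s * p).homogenize (s + i) = (.X 0 + .X 1) ^ s * p.homogenize i := by
  nontriviality R
  rw [homogenize_mul _ _ ((natDegree_pow_le_of_le s natDegree_X_add_one.le).trans_eq
    (mul_one s)) hp]
  congr 1
  exact homogenize_eq_of_isHomogeneous (isHomogeneous_X_add_X_pow s) (by simp)

theorem homogenize_mem_span_X_pow_pair_iff {p : R[X]} {D n m : ℕ} :
    p.homogenize D ∈ Ideal.span {.X 0 ^ (n + 1), .X 1 ^ (m + 1)} ↔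
      ∀ a ≤ n, a ≤ D → D ≤ a + m → p.coeff a = 0 := by
  rw [MvPolynomial.X_pow_eq_monomial, MvPolynomial.X_pow_eq_monomial,
    ← Set.image_pair (fun v => MvPolynomial.monomial v (1 : R)), mem_ideal_span_monomial_image]
  simp only [MvPolynomial.mem_support_iff, coeff_homogenize, Set.mem_insert_iff,
    Set.mem_singleton_iff, exists_eq_or_imp, exists_eq_left, Finsupp.single_le_iff]
  constructor
  · intro h a han haD hDa
    by_contra hpa
    have := h (Finsupp.single 0 a + Finsupp.single 1 (D - a))
      (by simp [show a + (D - a) = D by omega, hpa])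
    simp only [Finsupp.add_apply, Finsupp.single_eq_same, Finsupp.single_eq_of_ne zero_ne_one,
      Finsupp.single_eq_of_ne one_ne_zero, add_zero, zero_add] at this
    omega
  · intro h v hv
    split_ifs at hv with hvD
    · by_contra! hnm
      exact hv (h (v 0) (by omega) (by omega) (by omega))
    · exact absurd rfl hv

end Homogenize

end Polynomial

namespace MvPolynomial

open Polynomial (homogenize_X_add_one_pow_mul homogenize_mem_span_X_pow_pair_iff)

variable {K : Type*} [Field K] [CharZero K] {n m i : ℕ}

theorem mem_of_X_add_X_pow_mul_mem (hnm : n ≤ m) (hi : 2 * i ≤ n + m)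
    {f : MvPolynomial (Fin 2) K} (hf : f.IsHomogeneous i)
    (h : (X 0 + X 1) ^ (n + m - 2 * i) * f ∈ Ideal.span {X 0 ^ (n + 1), X 1 ^ (m + 1)}) :
    f ∈ Ideal.span {X 0 ^ (n + 1), X 1 ^ (m + 1)} := by
  obtain ⟨p, hp, rfl⟩ := hf.exists_homogenize_eq
  rw [← homogenize_X_add_one_pow_mul hp, homogenize_mem_span_X_pow_pair_iff] at h
  rw [homogenize_mem_span_X_pow_pair_iff]
  intro a han hai _
  rcases le_or_gt i n with hin | hni
  · rw [Polynomial.eq_zero_of_coeff_X_add_one_pow_mul_eq_zero (r := i) (e := n - i) (by omega) hp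
      fun b hb₁ hb₂ => h b (by omega) (by omega) (by omega), Polynomial.coeff_zero]
  -- For `n < i` the window `[0, n]` is too short to force `p = 0`, but gives `X ^ (n + 1) ∣ p`.
  · have hdvd : Polynomial.X ^ (n + 1) ∣ (Polynomial.X + 1) ^ (n + m - 2 * i) * p :=
      Polynomial.X_pow_dvd_iff.mpr fun b hb => h b (by omega) (by omega) (by omega)
    exact Polynomial.X_pow_dvd_iff.mp
      ((Polynomial.isCoprime_X_pow_X_add_one_pow _ _).dvd_of_dvd_mul_left hdvd) a (by omega)

theorem exists_X_add_X_pow_mul_sub_mem (hnm : n ≤ m) (hi : 2 * i ≤ n + m)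
    {g : MvPolynomial (Fin 2) K} (hg : g.IsHomogeneous (n + m - i)) :
    ∃ f : MvPolynomial (Fin 2) K, f.IsHomogeneous i ∧
      (X 0 + X 1) ^ (n + m - 2 * i) * f - g ∈ Ideal.span {X 0 ^ (n + 1), X 1 ^ (m + 1)} := by
  obtain ⟨q, -, rfl⟩ := hg.exists_homogenize_eq
  obtain ⟨p, hp, hpq⟩ := Polynomial.exists_natDegree_le_coeff_X_add_one_pow_mul_eq
    (r := min i n) (e := n - i) (s := n + m - 2 * i) (by omega) q
  refine ⟨p.homogenize i, Polynomial.isHomogeneous_homogenize p, ?_⟩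
  rw [← homogenize_X_add_one_pow_mul (hp.trans (min_le_left _ _)),
    show n + m - 2 * i + i = n + m - i by omega, ← Polynomial.homogenize_sub,
    homogenize_mem_span_X_pow_pair_iff]
  intro a han haD hDa
  rw [Polynomial.coeff_sub, hpq a (by omega) (by omega), sub_self]

end MvPolynomial

/-- For n ≤ m, X + Y is a strong Lefschetz element for
ℝ[X,Y]/(X^{n+1}, Y^{m+1}): for each 0 ≤ i ≤ ⌊(n+m)/2⌋, multiplication by
(X+Y)^{n+m-2i} is a linear isomorphism from the degree-i component onto the
degree-(n+m-i) component. -/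
theorem strong_lefschetz_two_variable_monomial_ci (n m : ℕ) (hnm : n ≤ m) :
    ∀ i : ℕ, i ≤ (n + m) / 2 →
      let X : MvPolynomial (Fin 2) ℝ := MvPolynomial.X 0
      let Y : MvPolynomial (Fin 2) ℝ := MvPolynomial.X 1
      let I : Ideal (MvPolynomial (Fin 2) ℝ) := Ideal.span {X ^ (n + 1), Y ^ (m + 1)}
      let q : MvPolynomial (Fin 2) ℝ →ₐ[ℝ] MvPolynomial (Fin 2) ℝ ⧸ I :=
        Ideal.Quotient.mkₐ ℝ I
      let V : ℕ → Submodule ℝ (MvPolynomial (Fin 2) ℝ ⧸ I) := fun j =>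
        (MvPolynomial.homogeneousSubmodule (Fin 2) ℝ j).map q.toLinearMap
      (∀ w ∈ V i, q (X + Y) ^ (n + m - 2 * i) * w = 0 → w = 0) ∧
        Submodule.map (LinearMap.mulLeft ℝ (q (X + Y) ^ (n + m - 2 * i))) (V i) =
          V (n + m - i) := by
  intro i hi X Y I q V
  replace hi : 2 * i ≤ n + m := by omega
  have hq : ∀ f, q (X + Y) ^ (n + m - 2 * i) * q f = q ((X + Y) ^ (n + m - 2 * i) * f) :=
    fun f => by rw [map_mul, map_pow]
  refine ⟨?_, le_antisymm ?_ ?_⟩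
  · rintro _ ⟨f, hf, rfl⟩ hzero
    rw [AlgHom.toLinearMap_apply, hq, Ideal.Quotient.mkₐ_eq_mk,
      Ideal.Quotient.eq_zero_iff_mem] at hzero
    exact Ideal.Quotient.eq_zero_iff_mem.mpr (mem_of_X_add_X_pow_mul_mem hnm hi hf hzero)
  · rintro _ ⟨_, ⟨f, hf, rfl⟩, rfl⟩
    refine ⟨(X + Y) ^ (n + m - 2 * i) * f, ?_, (hq f).symm⟩
    simpa [show n + m - 2 * i + i = n + m - i by omega] using
      (isHomogeneous_X_add_X_pow (n + m - 2 * i)).mul hf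
  · rintro _ ⟨g, hg, rfl⟩
    obtain ⟨f, hf, hfg⟩ := exists_X_add_X_pow_mul_sub_mem hnm hi hg
    exact ⟨q f, ⟨f, hf, rfl⟩, (hq f).trans (Ideal.Quotient.eq.mpr hfg)⟩
end

section
/- The determinant of the (i+1)×(i+1) matrix whose (j,k) entry is the binomial coefficient C(d-2i, n-i+j-k), for 0 ≤ j,k ≤ i ≤ n ≤ m with d = n+m, is nonzero. -/
open Matrix

/-- Extended binomial coefficient `C(a, z)` for integer `z`, zero when `z < 0`. -/
noncomputable def chAux (a : ℕ) (z : ℤ) : ℝ :=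
  if 0 ≤ z then (a.choose z.toNat : ℝ) else 0

lemma chAux_pascal (a : ℕ) (z : ℤ) : chAux (a + 1) z = chAux a z + chAux a (z - 1) := by
  unfold chAux
  rcases lt_trichotomy z 0 with h | h | h
  · rw [if_neg (by omega), if_neg (by omega), if_neg (by omega)]; ring
  · subst h
    rw [if_pos le_rfl, if_pos le_rfl, if_neg (by norm_num)]
    simp
  · rw [if_pos (by omega), if_pos (by omega), if_pos (by omega)]
    have h1 : z.toNat = (z - 1).toNat + 1 := by omega
    rw [h1, Nat.choose_succ_succ]
    push_cast
    ring

lemma chAux_eq_zero_of_ne {z : ℤ} (h : z ≠ 0) : chAux 0 z = 0 := by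
  unfold chAux
  split
  · rw [Nat.choose_eq_zero_of_lt (by omega)]
    norm_num
  · rfl

lemma chAux_zero_zero : chAux 0 0 = 1 := by simp [chAux]

/-- Key LGV-style lemma: minors of the Pascal Toeplitz matrix are nonnegative,
and positive when the diagonal entries are "inside". -/
lemma key (r : ℕ) : ∀ (a : ℕ) (p q : Fin r → ℤ), StrictMono p → StrictMono q →
    0 ≤ (Matrix.of fun j k => chAux a (p j - q k)).det ∧
    ((∀ j, 0 ≤ p j - q j ∧ p j - q j ≤ a) →
      0 < (Matrix.of fun j k => chAux a (p j - q k)).det) := by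
  intro a
  induction a with
  | zero =>
    intro p q hp hq
    have hmat : (∀ j, p j = q j) →
        (Matrix.of fun j k => chAux 0 (p j - q k)) = 1 := by
      intro hpq
      ext j k
      by_cases hjk : j = k
      · subst hjk
        simp [Matrix.of_apply, hpq j, chAux_zero_zero, Matrix.one_apply]
      · have : p j ≠ q k := by
          rw [hpq j]
          exact fun h => hjk (hq.injective h)
        rw [Matrix.of_apply, chAux_eq_zero_of_ne (by omega), Matrix.one_apply_ne hjk]
    constructor
    · by_cases hrow : ∀ j, ∃ k, p j = q k
      · -- build strictly monotone self-map, must be identity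
        choose f hf using hrow
        have hfm : StrictMono f := by
          intro j j' hjj'
          have : q (f j) < q (f j') := by rw [← hf j, ← hf j']; exact hp hjj'
          exact hq.lt_iff_lt.mp this
        haveI : WellFoundedLT (Fin r) := inferInstance
        haveI : WellFoundedGT (Fin r) := inferInstance
        have hid : ∀ j, f j = j := fun j =>
          le_antisymm (hfm.apply_le (x := j)) (hfm.le_apply (x := j))
        have hpq : ∀ j, p j = q j := fun j => by rw [hf j, hid j]
        rw [hmat hpq]
        simp
      · push_neg at hrow
        obtain ⟨j, hj⟩ := hrow
        rw [Matrix.det_eq_zero_of_row_eq_zero j (fun k => by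
          exact chAux_eq_zero_of_ne (by have := hj k; omega))]
    · intro hb
      have hpq : ∀ j, p j = q j := fun j => by have := hb j; omega
      rw [hmat hpq]
      simp
  | succ a ih =>
    intro p q hp hq
    -- expand each row by Pascal's rule
    set v : Fin r → Bool → (Fin r → ℝ) :=
      fun j c k => chAux a (p j - (if c then 1 else 0) - q k) with hv
    have expand : (Matrix.of fun j k => chAux (a + 1) (p j - q k)).det
        = ∑ f : Fin r → Bool, (Matrix.of fun j k => v j (f j) k).det := by
      have h0 : (Matrix.of fun j k => chAux (a + 1) (p j - q k))
          = fun j => ∑ c : Bool, v j c := by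
        ext j k
        rw [Matrix.of_apply, chAux_pascal]
        simp [hv, Fintype.sum_bool]
        ring_nf
      show Matrix.detRowAlternating _ = _
      rw [h0]
      exact Matrix.detRowAlternating.toMultilinearMap.map_sum v
    -- every summand is nonnegative
    have nonneg : ∀ f : Fin r → Bool,
        0 ≤ (Matrix.of fun j k => v j (f j) k).det := by
      intro f
      set p' : Fin r → ℤ := fun j => p j - (if f j then 1 else 0) with hp'
      have hrows : (Matrix.of fun j k => v j (f j) k)
          = Matrix.of fun j k => chAux a (p' j - q k) := by
        ext j k; simp [hv, hp', sub_sub, Matrix.of_apply]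
      rw [hrows]
      have hmono : Monotone p' := by
        intro j k hjk
        rcases eq_or_lt_of_le hjk with h | h
        · subst h; rfl
        · have := hp h
          simp only [hp']
          split <;> split <;> omega
      by_cases hinj : Function.Injective p'
      · exact (ih p' q (hmono.strictMono_of_injective hinj) hq).1
      · simp only [Function.Injective] at hinj
        push_neg at hinj
        obtain ⟨j, k, hjk, hne⟩ := hinj
        rw [Matrix.det_zero_of_row_eq hne (by ext l; simp [Matrix.of_apply, hjk])]
    refine ⟨expand ▸ Finset.sum_nonneg (fun f _ => nonneg f), ?_⟩
    intro hb
    -- the canonical choice gives a positive summand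
    set f₀ : Fin r → Bool := fun j => decide ((a : ℤ) < p j - q j) with hf₀
    set p₀ : Fin r → ℤ := fun j => p j - (if f₀ j then 1 else 0) with hp₀
    have hsm : StrictMono p₀ := by
      intro j k hjk
      have h1 := hp hjk
      have h2 := hq hjk
      have hbj := hb j
      have hbk := hb k
      simp only [hp₀, hf₀, decide_eq_true_eq]
      split <;> split <;> omega
    have hbounds : ∀ j, 0 ≤ p₀ j - q j ∧ p₀ j - q j ≤ a := by
      intro j
      have := hb j
      simp only [hp₀, hf₀, decide_eq_true_eq]
      split <;> omega
    have hpos := (ih p₀ q hsm hq).2 hbounds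
    have hrows : (Matrix.of fun j k => v j (f₀ j) k)
        = Matrix.of fun j k => chAux a (p₀ j - q k) := by
      ext j k; simp [hv, hp₀, sub_sub, Matrix.of_apply]
    rw [expand]
    refine Finset.sum_pos' (fun f _ => nonneg f) ⟨f₀, Finset.mem_univ _, ?_⟩
    rw [hrows]
    exact hpos

/-- The determinant of the (i+1)×(i+1) matrix whose (j,k) entry is the
binomial coefficient C(d-2i, n-i+j-k) (with the convention C(a,b) = 0 for b < 0),
for 0 ≤ j,k ≤ i ≤ n ≤ m and d = n+m, is nonzero. -/
theorem binomial_lefschetz_det_ne_zero (n m i : ℕ) (hin : i ≤ n) (hnm : n ≤ m) :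
    (Matrix.of fun j k : Fin (i + 1) =>
      if (k : ℕ) ≤ n - i + (j : ℕ) then
        ((n + m - 2 * i).choose (n - i + (j : ℕ) - (k : ℕ)) : ℝ)
      else 0).det ≠ 0 := by
  set a : ℕ := n + m - 2 * i with ha
  set p : Fin (i + 1) → ℤ := fun j => ((n - i : ℕ) : ℤ) + j with hpdef
  set q : Fin (i + 1) → ℤ := fun k => (k : ℤ) with hqdef
  have hp : StrictMono p := fun j k h => by
    simp only [hpdef]
    have : (j : ℤ) < k := by exact_mod_cast h
    omega
  have hq : StrictMono q := fun j k h => by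
    simp only [hqdef]
    exact_mod_cast h
  have hmat : (Matrix.of fun j k : Fin (i + 1) =>
      if (k : ℕ) ≤ n - i + (j : ℕ) then
        ((n + m - 2 * i).choose (n - i + (j : ℕ) - (k : ℕ)) : ℝ)
      else 0) = Matrix.of fun j k => chAux a (p j - q k) := by
    ext j k
    simp only [Matrix.of_apply, hpdef, hqdef, chAux, ← ha]
    by_cases h : (k : ℕ) ≤ n - i + (j : ℕ)
    · rw [if_pos h, if_pos (by omega)]
      have harg : n - i + (j : ℕ) - (k : ℕ)
          = ((((n - i : ℕ) : ℤ) + (j : ℕ) - (k : ℕ)).toNat) := by omega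
      rw [harg]
    · rw [if_neg h, if_neg (by omega)]
  rw [hmat]
  have hb : ∀ j, 0 ≤ p j - q j ∧ p j - q j ≤ (a : ℤ) := by
    intro j
    simp only [hpdef, hqdef]
    have h1 : ((n - i : ℕ) : ℤ) = (n : ℤ) - i := by omega
    have h2 : ((n + m - 2 * i : ℕ) : ℤ) = (n : ℤ) + m - 2 * i := by omega
    have h3 : (j : ℤ) ≤ i := by
      have := j.isLt
      omega
    omega
  exact ((key (i + 1) a p q hp hq).2 hb).ne'
end

section
/- If (U, μ) and (V, ν) are Lefschetz algebras, then the tensor product W = U ⊗_ℝ V with element ω = μ⊗1 + 1⊗ν is a Lefschetz algebra. -/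
open TensorProduct

/-- `l` is a (strong) Lefschetz element for the graded algebra `𝒜` with top degree `r`:
`l` has degree 1 and for all `0 ≤ i ≤ ⌊r/2⌋` multiplication by `l^(r-2i)` is a linear
isomorphism from the degree-`i` component onto the degree-`(r-i)` component. -/
def IsLefschetzElem {R : Type*} [CommRing R] [Algebra ℝ R]
    (𝒜 : ℕ → Submodule ℝ R) (r : ℕ) (l : R) : Prop :=
  l ∈ 𝒜 1 ∧ ∀ i : ℕ, i ≤ r / 2 →
    (∀ w ∈ 𝒜 i, l ^ (r - 2 * i) * w = 0 → w = 0) ∧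
      Submodule.map (LinearMap.mulLeft ℝ (l ^ (r - 2 * i))) (𝒜 i) = 𝒜 (r - i)

/-- The ℕ-graded Artinian ℝ-algebra conditions: `𝒜` is an algebra grading of `R`,
`R` is finite dimensional over ℝ, the degree zero part is `ℝ·1`, and all components
above the top degree `r` vanish (with the top component nonzero). -/
def IsGradedArtinian (R : Type*) [CommRing R] [Algebra ℝ R]
    (𝒜 : ℕ → Submodule ℝ R) (r : ℕ) [GradedAlgebra 𝒜] : Prop :=
  FiniteDimensional ℝ R ∧ 𝒜 0 = Submodule.span ℝ {1} ∧ 𝒜 r ≠ ⊥ ∧ ∀ i, r < i → 𝒜 i = ⊥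

/-- The grading on the tensor product `U ⊗[ℝ] V`: the degree-`k` component is spanned
by tensors of elements of degree `i` times elements of degree `j` with `i + j = k`. -/
noncomputable def tensorGrading {U V : Type*} [CommRing U] [Algebra ℝ U]
    [CommRing V] [Algebra ℝ V] (𝒜 : ℕ → Submodule ℝ U) (ℬ : ℕ → Submodule ℝ V) :
    ℕ → Submodule ℝ (U ⊗[ℝ] V) := fun k =>
  ⨆ i : ℕ, ⨆ j : ℕ, ⨆ _ : i + j = k,
    LinearMap.range (TensorProduct.map (𝒜 i).subtype (ℬ j).subtype)

/-!
A Lefschetz element `μ` of `U` is the raising operator `E = μ ·` of a graded `sl₂`-action on `U`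
with `H = 2 · deg - r`: the lowering operator `F` is built degree by degree from the recursion
`F (μ u) = μ F u - (2m - r) u` forced by `[E, F] = H`, using hard Lefschetz to invert `μ` on the
non-primitive part. Such pairs `(E, F)` tensor: `E₁ ⊗ 1 + 1 ⊗ E₂` and `F₁ ⊗ 1 + 1 ⊗ F₂` again
satisfy `[E, F] = H`, and `E₁ ⊗ 1 + 1 ⊗ E₂` is multiplication by `μ ⊗ 1 + 1 ⊗ ν`. Conversely, for
any graded `sl₂`-pair `E^(r-2i)` is injective in degree `i` (a nonzero primitive vector of degree
`i` generates a string of length `r - 2i + 1`), and applying this to the reflected pair `(F, E)`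
gives the dimension count that makes it bijective.
-/

theorem LinearMap.exists_comp_eq_of_range_le {R M N P : Type*} [Semiring R] [AddCommMonoid M]
    [Module R M] [AddCommMonoid N] [Module R N] [AddCommMonoid P] [Module R P]
    [Module.Projective R P] (f : M →ₗ[R] N) (g : P →ₗ[R] N) (h : range g ≤ range f) :
    ∃ τ : P →ₗ[R] M, f ∘ₗ τ = g := by
  obtain ⟨τ, hτ⟩ := Module.projective_lifting_property f.rangeRestrict
    (g.codRestrict _ fun x => h ⟨x, rfl⟩) f.surjective_rangeRestrict
  exact ⟨τ, LinearMap.ext fun x => congrArg Subtype.val (LinearMap.congr_fun hτ x)⟩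

theorem DirectSum.Decomposition.exists_linearMap_apply {ι R M N : Type*} [DecidableEq ι]
    [Semiring R] [AddCommMonoid M] [Module R M] [AddCommMonoid N] [Module R N]
    (𝒜 : ι → Submodule R M) [DirectSum.Decomposition 𝒜] (f : ∀ i, 𝒜 i →ₗ[R] N) :
    ∃ F : M →ₗ[R] N, ∀ i (x : 𝒜 i), F x = f i x :=
  ⟨DirectSum.toModule R ι N f ∘ₗ (DirectSum.decomposeLinearEquiv 𝒜).toLinearMap, fun i x => by
    simp⟩

section Sl2

variable {K W : Type*} [Field K] [AddCommGroup W] [Module K W]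

structure IsGradedSl2Pair (g : ℕ → Submodule K W) (r : ℕ) (E F : Module.End K W) : Prop where
  map_raise : ∀ m, ∀ w ∈ g m, E w ∈ g (m + 1)
  map_lower : ∀ m, ∀ w ∈ g (m + 1), F w ∈ g m
  lower_of_mem_zero : ∀ w ∈ g 0, F w = 0
  eq_bot_of_lt : ∀ m, r < m → g m = ⊥
  comm : ∀ m, ∀ w ∈ g m, E (F w) - F (E w) = (2 * m - r : K) • w

theorem Submodule.finrank_le_of_injOn {M N : Type*} [AddCommGroup M] [Module K M]
    [AddCommGroup N] [Module K N] {p : Submodule K M} {q : Submodule K N} [FiniteDimensional K q]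
    {f : M →ₗ[K] N} (hinj : ∀ x ∈ p, f x = 0 → x = 0) (hmaps : ∀ x ∈ p, f x ∈ q) :
    Module.finrank K p ≤ Module.finrank K q :=
  LinearMap.finrank_le_finrank_of_injective (f := f.restrict hmaps) <|
    (injective_iff_map_eq_zero _).2 fun x hx => Subtype.ext (hinj x x.2 (congrArg Subtype.val hx))

def reflectGrading (g : ℕ → Submodule K W) (r m : ℕ) : Submodule K W :=
  if m ≤ r then g (r - m) else ⊥

theorem reflectGrading_of_le {g : ℕ → Submodule K W} {r m : ℕ} (hm : m ≤ r) :
    reflectGrading g r m = g (r - m) :=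
  if_pos hm

theorem reflectGrading_of_lt {g : ℕ → Submodule K W} {r m : ℕ} (hm : r < m) :
    reflectGrading g r m = ⊥ :=
  if_neg hm.not_ge

namespace IsGradedSl2Pair

variable {g : ℕ → Submodule K W} {r : ℕ} {E F : Module.End K W}

theorem pow_apply_mem (h : IsGradedSl2Pair g r E F) (n : ℕ) {m : ℕ} {w : W} (hw : w ∈ g m) :
    (E ^ n) w ∈ g (m + n) := by
  induction n with
  | zero => simpa using hw
  | succ n ih => rw [pow_succ', Module.End.mul_apply]; exact h.map_raise _ _ ih

theorem lower_pow_succ_apply (h : IsGradedSl2Pair g r E F) (n : ℕ) {m : ℕ} {w : W}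
    (hw : w ∈ g m) :
    F ((E ^ (n + 1)) w) =
      (E ^ (n + 1)) (F w) - ((n + 1) * (2 * m - r + n) : K) • (E ^ n) w := by
  induction n with
  | zero =>
    have := h.comm m w hw
    simp only [zero_add, pow_one, pow_zero, Module.End.one_apply, Nat.cast_zero, add_zero, one_mul]
    rw [← this]
    abel
  | succ n ih =>
    have hc := h.comm _ _ (h.pow_apply_mem (n + 1) hw)
    have hF : F (E ((E ^ (n + 1)) w)) =
        E (F ((E ^ (n + 1)) w)) - (2 * ((m + (n + 1) : ℕ) : K) - r) • (E ^ (n + 1)) w := by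
      rw [← hc]; abel
    rw [pow_succ' E (n + 1), Module.End.mul_apply, hF, ih, map_sub, map_smul,
      ← Module.End.mul_apply E (E ^ n), ← pow_succ', ← Module.End.mul_apply E (E ^ (n + 1)),
      ← pow_succ', sub_sub, ← add_smul]
    congr 2
    push_cast
    ring

theorem eq_zero_of_lower_eq_zero [CharZero K] (h : IsGradedSl2Pair g r E F) {m n : ℕ}
    (hmn : 2 * m + n ≤ r) {w : W} (hw : w ∈ g m) (hFw : F w = 0) (hEw : (E ^ n) w = 0) :
    w = 0 := by
  induction n with
  | zero => simpa using hEw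
  | succ n ih =>
    refine ih (by omega) ?_
    have hstring := h.lower_pow_succ_apply n hw
    rw [hEw, map_zero, hFw, map_zero, zero_sub, eq_comm, neg_eq_zero, smul_eq_zero] at hstring
    refine hstring.resolve_left ?_
    have hcoeff : ((n + 1) * (2 * m - r + n) : K) = -(((n + 1) * (r - (2 * m + n)) : ℕ) : K) := by
      push_cast [Nat.cast_sub (show 2 * m + n ≤ r by omega)]
      ring
    rw [hcoeff, neg_eq_zero, Nat.cast_eq_zero]
    exact Nat.mul_ne_zero n.succ_ne_zero (by omega)

theorem eq_zero_of_pow_apply_eq_zero [CharZero K] (h : IsGradedSl2Pair g r E F) {i : ℕ}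
    (hi : 2 * i ≤ r) {w : W} (hw : w ∈ g i) (hEw : (E ^ (r - 2 * i)) w = 0) : w = 0 := by
  induction i generalizing w with
  | zero => exact h.eq_zero_of_lower_eq_zero (by omega) hw (h.lower_of_mem_zero w hw) hEw
  | succ i ih =>
    obtain ⟨k, hk⟩ : ∃ k, r - 2 * (i + 1) = k := ⟨_, rfl⟩
    rw [hk] at hEw
    have hvanish (j : ℕ) : (E ^ (k + j)) w = 0 := by
      rw [add_comm, pow_add, Module.End.mul_apply, hEw, map_zero]
    -- `F (E^(k+2) w) = 0` and `E^(k+1) w = 0` force `E^(k+2) (F w) = 0`, one degree lower.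
    have hstring := h.lower_pow_succ_apply (k + 1) hw
    rw [hvanish 1, hvanish (1 + 1), map_zero, smul_zero, sub_zero, eq_comm] at hstring
    have hFw : F w = 0 :=
      ih (by omega) (h.map_lower i w hw) (by rwa [show r - 2 * i = k + 1 + 1 by omega])
    exact h.eq_zero_of_lower_eq_zero (by omega) hw hFw hEw

theorem reflect (h : IsGradedSl2Pair g r E F) : IsGradedSl2Pair (reflectGrading g r) r F E where
  map_raise m w hw := by
    rcases lt_trichotomy m r with hm | rfl | hm
    · rw [reflectGrading_of_le hm.le, show r - m = r - (m + 1) + 1 by omega] at hw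
      rw [reflectGrading_of_le hm]
      exact h.map_lower _ _ hw
    · rw [reflectGrading_of_le le_rfl, Nat.sub_self] at hw
      rw [h.lower_of_mem_zero w hw]
      exact zero_mem _
    · rw [reflectGrading_of_lt hm, Submodule.mem_bot] at hw
      rw [hw, map_zero]
      exact zero_mem _
  map_lower m w hw := by
    rcases le_or_gt (m + 1) r with hm | hm
    · rw [reflectGrading_of_le hm] at hw
      rw [reflectGrading_of_le (by omega), show r - m = r - (m + 1) + 1 by omega]
      exact h.map_raise _ _ hw
    · rw [reflectGrading_of_lt hm, Submodule.mem_bot] at hw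
      rw [hw, map_zero]
      exact zero_mem _
  lower_of_mem_zero w hw := by
    rw [reflectGrading_of_le r.zero_le, Nat.sub_zero] at hw
    simpa [h.eq_bot_of_lt _ r.lt_succ_self] using h.map_raise r w hw
  eq_bot_of_lt _ hm := reflectGrading_of_lt hm
  comm m w hw := by
    rcases le_or_gt m r with hm | hm
    · rw [reflectGrading_of_le hm] at hw
      have hc := h.comm _ _ hw
      rw [Nat.cast_sub hm] at hc
      rw [← neg_sub, hc, ← neg_smul]
      congr 1
      ring
    · rw [reflectGrading_of_lt hm, Submodule.mem_bot] at hw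
      simp [hw]

theorem map_pow_eq [CharZero K] [FiniteDimensional K W] (h : IsGradedSl2Pair g r E F) {i : ℕ}
    (hi : 2 * i ≤ r) : (g i).map (E ^ (r - 2 * i)) = g (r - i) := by
  have hle : (g i).map (E ^ (r - 2 * i)) ≤ g (r - i) := by
    rintro _ ⟨w, hw, rfl⟩
    simpa [show i + (r - 2 * i) = r - i by omega] using h.pow_apply_mem (r - 2 * i) hw
  refine Submodule.eq_of_le_of_finrank_le hle ?_
  have hsource : reflectGrading g r i = g (r - i) := reflectGrading_of_le (by omega)
  have htarget : reflectGrading g r (i + (r - 2 * i)) = g i := by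
    rw [reflectGrading_of_le (by omega)]
    congr 1
    omega
  calc Module.finrank K (g (r - i))
      ≤ Module.finrank K (g i) := by
        refine Submodule.finrank_le_of_injOn (f := F ^ (r - 2 * i)) (fun w hw => ?_)
          fun w hw => ?_
        · exact h.reflect.eq_zero_of_pow_apply_eq_zero hi (hsource ▸ hw)
        · exact htarget ▸ h.reflect.pow_apply_mem _ (hsource ▸ hw)
    _ ≤ Module.finrank K ((g i).map (E ^ (r - 2 * i))) :=
        Submodule.finrank_le_of_injOn (fun w hw => h.eq_zero_of_pow_apply_eq_zero hi hw)
          fun w hw => Submodule.mem_map_of_mem hw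

end IsGradedSl2Pair

end Sl2

section LefschetzAlgebra

variable {U : Type*} [CommRing U] [Algebra ℝ U] {𝒜 : ℕ → Submodule ℝ U} {r : ℕ} {μ : U}

theorem smul_pow_mul_eq_zero_of_primitive {k t : ℕ} {p : U} (hp : μ ^ (r + 1 - 2 * k) * p = 0)
    (ht : r ≤ 2 * k + t) : (2 * k - r + t : ℝ) • (μ ^ t * p) = 0 := by
  rcases ht.eq_or_lt with hr | hr
  · have hcoeff : (2 * k - r + t : ℝ) = 0 := by rw [hr]; push_cast; ring
    rw [hcoeff, zero_smul]
  · rw [show t = t - (r + 1 - 2 * k) + (r + 1 - 2 * k) by omega, pow_add, mul_assoc, hp,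
      mul_zero, smul_zero]

theorem IsLefschetzElem.eq_zero_of_pow_mul_eq_zero (hμ : IsLefschetzElem 𝒜 r μ) {i a : ℕ}
    (h : 2 * i + a ≤ r) {u : U} (hu : u ∈ 𝒜 i) (hu0 : μ ^ a * u = 0) : u = 0 :=
  (hμ.2 i (by omega)).1 u hu <| by
    rw [show r - 2 * i = r - 2 * i - a + a by omega, pow_add, mul_assoc, hu0, mul_zero]

/-- The lowering operator determined by `F (μ u) = μ F u - (2m - r) u`, where `τ m` splits
multiplication by `μ : 𝒜 m → 𝒜 (m + 1)` (see `IsLefschetzElem.exists_section`). -/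
noncomputable def gradedLowering (μ : U) (r : ℕ) (τ : ∀ m, 𝒜 (m + 1) →ₗ[ℝ] 𝒜 m) :
    ∀ m, 𝒜 m →ₗ[ℝ] U
  | 0 => 0
  | m + 1 => (LinearMap.mulLeft ℝ μ ∘ₗ gradedLowering μ r τ m - (2 * m - r : ℝ) • (𝒜 m).subtype)
      ∘ₗ τ m

theorem gradedLowering_succ_apply (τ : ∀ m, 𝒜 (m + 1) →ₗ[ℝ] 𝒜 m) (m : ℕ) (z : 𝒜 (m + 1)) :
    gradedLowering μ r τ (m + 1) z =
      μ * gradedLowering μ r τ m (τ m z) - (2 * m - r : ℝ) • (τ m z : U) :=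
  rfl

variable [GradedAlgebra 𝒜]

namespace IsLefschetzElem

theorem mul_mem (hμ : IsLefschetzElem 𝒜 r μ) {i : ℕ} {u : U} (hu : u ∈ 𝒜 i) :
    μ * u ∈ 𝒜 (i + 1) :=
  add_comm 1 i ▸ SetLike.mul_mem_graded hμ.1 hu

theorem pow_mul_mem (hμ : IsLefschetzElem 𝒜 r μ) (a : ℕ) {i : ℕ} {u : U} (hu : u ∈ 𝒜 i) :
    μ ^ a * u ∈ 𝒜 (i + a) := by
  simpa [add_comm] using SetLike.mul_mem_graded (SetLike.pow_mem_graded a hμ.1) hu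

theorem exists_pow_mul_eq (hμ : IsLefschetzElem 𝒜 r μ) (htop : ∀ m, r < m → 𝒜 m = ⊥)
    {i a : ℕ} (h : r ≤ 2 * i + a) {y : U} (hy : y ∈ 𝒜 (i + a)) : ∃ x ∈ 𝒜 i, μ ^ a * x = y := by
  rcases lt_or_ge r (i + a) with hia | hia
  · rw [htop _ hia, Submodule.mem_bot] at hy
    exact ⟨0, zero_mem _, by rw [hy, mul_zero]⟩
  set j := r - (i + a)
  rw [show i + a = r - j by omega, ← (hμ.2 j (by omega)).2] at hy
  obtain ⟨x, hx, rfl⟩ := hy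
  refine ⟨μ ^ (2 * i + a - r) * x, ?_, ?_⟩
  · simpa [show j + (2 * i + a - r) = i by omega] using hμ.pow_mul_mem (2 * i + a - r) hx
  · rw [← mul_assoc, ← pow_add, LinearMap.mulLeft_apply]
    congr 2
    omega

/-- For `2m + 1 < r` the exponent is positive and `z - μ τ z` is primitive; otherwise it is zero
and `τ` is a right inverse of multiplication by `μ`. -/
theorem exists_section (hμ : IsLefschetzElem 𝒜 r μ) (htop : ∀ m, r < m → 𝒜 m = ⊥) (m : ℕ) :
    ∃ τ : 𝒜 (m + 1) →ₗ[ℝ] 𝒜 m,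
      ∀ z : 𝒜 (m + 1), μ ^ (r - (2 * m + 1)) * ((z : U) - μ * τ z) = 0 := by
  set s := r - (2 * m + 1)
  obtain ⟨τ, hτ⟩ := LinearMap.exists_comp_eq_of_range_le
    (LinearMap.mulLeft ℝ (μ ^ (s + 1)) ∘ₗ (𝒜 m).subtype)
    (LinearMap.mulLeft ℝ (μ ^ s) ∘ₗ (𝒜 (m + 1)).subtype) <| by
      rintro _ ⟨z, rfl⟩
      obtain ⟨x, hx, hxz⟩ := hμ.exists_pow_mul_eq htop (i := m) (a := s + 1) (by omega)
        (by simpa [show m + 1 + s = m + (s + 1) by omega] using hμ.pow_mul_mem s z.2)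
      exact ⟨⟨x, hx⟩, hxz⟩
  refine ⟨τ, fun z => ?_⟩
  have hz := LinearMap.congr_fun hτ z
  simp only [LinearMap.comp_apply, LinearMap.mulLeft_apply, Submodule.subtype_apply] at hz
  rw [mul_sub, ← mul_assoc, ← pow_succ, hz, sub_self]

theorem gradedLowering_mem (hμ : IsLefschetzElem 𝒜 r μ) (τ : ∀ m, 𝒜 (m + 1) →ₗ[ℝ] 𝒜 m) :
    ∀ m (z : 𝒜 (m + 1)), gradedLowering μ r τ (m + 1) z ∈ 𝒜 m
  | 0, z => by
    rw [gradedLowering_succ_apply, gradedLowering, LinearMap.zero_apply, mul_zero, zero_sub]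
    exact neg_mem (Submodule.smul_mem _ _ (τ 0 z).2)
  | m + 1, z => by
    rw [gradedLowering_succ_apply]
    exact sub_mem (hμ.mul_mem (gradedLowering_mem hμ τ m _)) (Submodule.smul_mem _ _ (τ _ z).2)

/-- The identity `E^(t+1) F = F E^(t+1) + (t + 1) E^t (H + t)` on `ker E^(t+1)`; it is what makes
`F (μ u)` well defined where multiplication by `μ` is not injective. -/
theorem pow_succ_mul_gradedLowering (hμ : IsLefschetzElem 𝒜 r μ) (htop : ∀ m, r < m → 𝒜 m = ⊥)
    {τ : ∀ m, 𝒜 (m + 1) →ₗ[ℝ] 𝒜 m}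
    (hτ : ∀ m (z : 𝒜 (m + 1)), μ ^ (r - (2 * m + 1)) * ((z : U) - μ * τ m z) = 0)
    (m : ℕ) (z : 𝒜 m) (t : ℕ) (hz : μ ^ (t + 1) * z = 0) :
    μ ^ (t + 1) * gradedLowering μ r τ m z = ((t + 1) * (2 * m - r + t) : ℝ) • (μ ^ t * z) := by
  have hsmall : ∀ m (z : 𝒜 m) t, μ ^ (t + 1) * (z : U) = 0 → 2 * m + (t + 1) ≤ r →
      μ ^ (t + 1) * gradedLowering μ r τ m z = ((t + 1) * (2 * m - r + t) : ℝ) • (μ ^ t * z) := by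
    intro m z t hz h
    obtain rfl : z = 0 := Subtype.ext (hμ.eq_zero_of_pow_mul_eq_zero h z.2 hz)
    simp
  induction m generalizing t with
  | zero =>
    rcases le_or_gt (2 * 0 + (t + 1)) r with h | h
    · exact hsmall 0 z t hz h
    have hprim : μ ^ (r + 1 - 2 * 0) * z = 0 := by
      simpa [htop (r + 1) r.lt_succ_self] using hμ.pow_mul_mem (r + 1) z.2
    rw [gradedLowering, LinearMap.zero_apply, mul_zero, mul_smul,
      smul_pow_mul_eq_zero_of_primitive hprim (by omega), smul_zero]
  | succ m ih =>
    rcases le_or_gt (2 * (m + 1) + (t + 1)) r with h | h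
    · exact hsmall _ z t hz h
    set y := τ m z
    have hprim : μ ^ (r + 1 - 2 * (m + 1)) * ((z : U) - μ * y) = 0 := by
      rw [show r + 1 - 2 * (m + 1) = r - (2 * m + 1) by omega]
      exact hτ m z
    have hy : μ ^ (t + 1 + 1) * (y : U) = 0 := by
      have hzy : μ ^ (t + 1) * ((z : U) - μ * y) = 0 := by
        rw [show t + 1 = t + 1 - (r + 1 - 2 * (m + 1)) + (r + 1 - 2 * (m + 1)) by omega,
          pow_add, mul_assoc, hprim, mul_zero]
      calc μ ^ (t + 1 + 1) * (y : U) = μ ^ (t + 1) * z - μ ^ (t + 1) * ((z : U) - μ * y) := by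
            ring
        _ = 0 := by rw [hz, hzy, sub_zero]
    have hsplit : μ ^ t * (z : U) = μ ^ t * ((z : U) - μ * y) + μ ^ (t + 1) * y := by ring
    rw [gradedLowering_succ_apply, mul_sub, ← mul_assoc, ← pow_succ, ih y (t + 1) hy,
      mul_smul_comm, ← sub_smul, hsplit, smul_add, mul_smul ((t : ℝ) + 1),
      smul_pow_mul_eq_zero_of_primitive hprim (by omega), smul_zero, zero_add]
    congr 1
    push_cast
    ring

theorem mul_gradedLowering_sub (hμ : IsLefschetzElem 𝒜 r μ) (htop : ∀ m, r < m → 𝒜 m = ⊥)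
    {τ : ∀ m, 𝒜 (m + 1) →ₗ[ℝ] 𝒜 m}
    (hτ : ∀ m (z : 𝒜 (m + 1)), μ ^ (r - (2 * m + 1)) * ((z : U) - μ * τ m z) = 0)
    (m : ℕ) (u : 𝒜 m) (hμu : μ * (u : U) ∈ 𝒜 (m + 1)) :
    μ * gradedLowering μ r τ m u - gradedLowering μ r τ (m + 1) ⟨μ * u, hμu⟩ =
      (2 * m - r : ℝ) • (u : U) := by
  set y := τ m ⟨μ * u, hμu⟩ - u
  have hy : μ ^ (r - (2 * m + 1) + 1) * (y : U) = 0 := by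
    calc μ ^ (r - (2 * m + 1) + 1) * (y : U)
        = -(μ ^ (r - (2 * m + 1)) * (μ * u - μ * τ m ⟨μ * u, hμu⟩)) := by
          simp only [y, Submodule.coe_sub]
          ring
      _ = 0 := by rw [hτ m ⟨μ * u, hμu⟩, neg_zero]
  have hμy : μ * gradedLowering μ r τ m y = (2 * m - r : ℝ) • (y : U) := by
    rcases le_or_gt r (2 * m + 1) with h | h
    · rw [show r - (2 * m + 1) = 0 by omega] at hy
      simpa using pow_succ_mul_gradedLowering hμ htop hτ m y 0 hy
    · obtain hy0 : y = 0 := Subtype.ext (hμ.eq_zero_of_pow_mul_eq_zero (by omega) y.2 hy)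
      rw [hy0]
      simp
  have hτu : τ m ⟨μ * u, hμu⟩ = u + y := by simp [y]
  rw [gradedLowering_succ_apply, hτu, map_add, Submodule.coe_add, mul_add, hμy, smul_add]
  abel

theorem exists_isGradedSl2Pair (hμ : IsLefschetzElem 𝒜 r μ) (htop : ∀ m, r < m → 𝒜 m = ⊥) :
    ∃ F : Module.End ℝ U, IsGradedSl2Pair 𝒜 r (LinearMap.mulLeft ℝ μ) F := by
  choose τ hτ using hμ.exists_section htop
  obtain ⟨F, hF⟩ := DirectSum.Decomposition.exists_linearMap_apply 𝒜 (gradedLowering μ r τ)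
  refine ⟨F, fun m w hw => hμ.mul_mem hw, fun m w hw => ?_, fun w hw => ?_, htop,
    fun m w hw => ?_⟩
  · rw [hF (m + 1) ⟨w, hw⟩]
    exact hμ.gradedLowering_mem τ m _
  · rw [hF 0 ⟨w, hw⟩]
    rfl
  · rw [LinearMap.mulLeft_apply, LinearMap.mulLeft_apply, hF m ⟨w, hw⟩,
      hF (m + 1) ⟨μ * w, hμ.mul_mem hw⟩]
    exact hμ.mul_gradedLowering_sub htop hτ m ⟨w, hw⟩ _

end IsLefschetzElem

end LefschetzAlgebra

theorem IsGradedSl2Pair.isLefschetzElem {R : Type*} [CommRing R] [Algebra ℝ R]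
    [FiniteDimensional ℝ R] {g : ℕ → Submodule ℝ R} {r : ℕ} {l : R} {F : Module.End ℝ R}
    (h : IsGradedSl2Pair g r (LinearMap.mulLeft ℝ l) F) (hl : l ∈ g 1) :
    IsLefschetzElem g r l := by
  refine ⟨hl, fun i hi => ?_⟩
  have h2i : 2 * i ≤ r := by omega
  rw [← LinearMap.pow_mulLeft]
  refine ⟨fun w hw hw0 => h.eq_zero_of_pow_apply_eq_zero h2i hw ?_, h.map_pow_eq h2i⟩
  rwa [LinearMap.pow_mulLeft, LinearMap.mulLeft_apply]

theorem LinearMap.rTensor_add_lTensor_commutator {R M N : Type*} [CommRing R] [AddCommGroup M]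
    [Module R M] [AddCommGroup N] [Module R N] (E₁ F₁ : Module.End R M) (E₂ F₂ : Module.End R N) :
    (rTensor N E₁ + lTensor M E₂) * (rTensor N F₁ + lTensor M F₂) -
        (rTensor N F₁ + lTensor M F₂) * (rTensor N E₁ + lTensor M E₂) =
      rTensor N (E₁ * F₁ - F₁ * E₁) + lTensor M (E₂ * F₂ - F₂ * E₂) := by
  ext x y
  simp
  abel

theorem Algebra.TensorProduct.mulLeft_tmul_one_add_one_tmul {R A B : Type*} [CommRing R]
    [Ring A] [Algebra R A] [Ring B] [Algebra R B] (a : A) (b : B) :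
    LinearMap.mulLeft R (a ⊗ₜ[R] (1 : B) + (1 : A) ⊗ₜ[R] b) =
      LinearMap.rTensor B (LinearMap.mulLeft R a) +
        LinearMap.lTensor A (LinearMap.mulLeft R b) := by
  ext x y
  simp [add_mul]

section TensorGrading

variable {U V : Type*} [CommRing U] [Algebra ℝ U] [CommRing V] [Algebra ℝ V]
  {𝒜 : ℕ → Submodule ℝ U} {ℬ : ℕ → Submodule ℝ V}

theorem tmul_mem_tensorGrading {i j : ℕ} {u : U} {v : V} (hu : u ∈ 𝒜 i) (hv : v ∈ ℬ j) :
    u ⊗ₜ[ℝ] v ∈ tensorGrading 𝒜 ℬ (i + j) :=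
  Submodule.mem_iSup_of_mem i <| Submodule.mem_iSup_of_mem j <| Submodule.mem_iSup_of_mem rfl
    ⟨(⟨u, hu⟩ : 𝒜 i) ⊗ₜ[ℝ] (⟨v, hv⟩ : ℬ j), rfl⟩

theorem tensorGrading_le {P : Submodule ℝ (U ⊗[ℝ] V)} {k : ℕ}
    (h : ∀ i j, i + j = k → ∀ u ∈ 𝒜 i, ∀ v ∈ ℬ j, u ⊗ₜ[ℝ] v ∈ P) :
    tensorGrading 𝒜 ℬ k ≤ P := by
  refine iSup_le fun i => iSup_le fun j => iSup_le fun hij => ?_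
  rintro _ ⟨x, rfl⟩
  induction x with
  | zero => simp
  | tmul u v => exact h i j hij u u.2 v v.2
  | add x y hx hy => rw [map_add]; exact P.add_mem hx hy

open LinearMap in
theorem IsGradedSl2Pair.tensor {ru rv : ℕ} {E₁ F₁ : Module.End ℝ U} {E₂ F₂ : Module.End ℝ V}
    (h₁ : IsGradedSl2Pair 𝒜 ru E₁ F₁) (h₂ : IsGradedSl2Pair ℬ rv E₂ F₂) :
    IsGradedSl2Pair (tensorGrading 𝒜 ℬ) (ru + rv)
      (rTensor V E₁ + lTensor U E₂) (rTensor V F₁ + lTensor U F₂) where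
  map_raise k w hw := by
    refine tensorGrading_le (P := (tensorGrading 𝒜 ℬ (k + 1)).comap _)
      (fun i j hij u hu v hv => ?_) hw
    simp only [Submodule.mem_comap, LinearMap.add_apply, rTensor_tmul, lTensor_tmul]
    refine add_mem ?_ ?_
    · simpa [← hij, add_right_comm] using tmul_mem_tensorGrading (h₁.map_raise i u hu) hv
    · simpa [← hij, add_assoc] using tmul_mem_tensorGrading hu (h₂.map_raise j v hv)
  map_lower k w hw := by
    refine tensorGrading_le (P := (tensorGrading 𝒜 ℬ k).comap _)
      (fun i j hij u hu v hv => ?_) hw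
    simp only [Submodule.mem_comap, LinearMap.add_apply, rTensor_tmul, lTensor_tmul]
    refine add_mem ?_ ?_
    · cases i with
      | zero => simp [h₁.lower_of_mem_zero u hu]
      | succ i =>
        simpa [show i + j = k by omega] using tmul_mem_tensorGrading (h₁.map_lower i u hu) hv
    · cases j with
      | zero => simp [h₂.lower_of_mem_zero v hv]
      | succ j =>
        simpa [show i + j = k by omega] using tmul_mem_tensorGrading hu (h₂.map_lower j v hv)
  lower_of_mem_zero w hw := by
    refine tensorGrading_le (P := ker _) (fun i j hij u hu v hv => ?_) hw
    obtain ⟨rfl, rfl⟩ : i = 0 ∧ j = 0 := by omega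
    simp [h₁.lower_of_mem_zero u hu, h₂.lower_of_mem_zero v hv]
  eq_bot_of_lt k hk := by
    refine eq_bot_iff.2 (tensorGrading_le fun i j hij u hu v hv => ?_)
    rcases lt_or_ge ru i with hi | hi
    · simp [(Submodule.mem_bot ℝ).1 (h₁.eq_bot_of_lt i hi ▸ hu)]
    · simp [(Submodule.mem_bot ℝ).1 (h₂.eq_bot_of_lt j (by omega) ▸ hv)]
  comm k w hw := by
    rw [← Module.End.mul_apply, ← Module.End.mul_apply, ← LinearMap.sub_apply,
      rTensor_add_lTensor_commutator]
    refine tensorGrading_le (P := eqLocus _ ((2 * k - (ru + rv : ℕ) : ℝ) • LinearMap.id))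
      (fun i j hij u hu v hv => ?_) hw
    rw [mem_eqLocus, LinearMap.add_apply, rTensor_tmul, lTensor_tmul, LinearMap.sub_apply,
      LinearMap.sub_apply, Module.End.mul_apply, Module.End.mul_apply, Module.End.mul_apply,
      Module.End.mul_apply, h₁.comm i u hu, h₂.comm j v hv, LinearMap.smul_apply,
      LinearMap.id_apply, ← hij, ← TensorProduct.smul_tmul', TensorProduct.tmul_smul, ← add_smul]
    congr 1
    push_cast
    ring

end TensorGrading

/-- If (U, μ) and (V, ν) are Lefschetz algebras, then the tensor product
W = U ⊗_ℝ V with element ω = μ⊗1 + 1⊗ν is a Lefschetz algebra (its top degree being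
the sum of the top degrees). -/
theorem tensor_product_lefschetz {U V : Type*}
    [CommRing U] [Algebra ℝ U] [CommRing V] [Algebra ℝ V]
    (𝒜 : ℕ → Submodule ℝ U) (ℬ : ℕ → Submodule ℝ V)
    [GradedAlgebra 𝒜] [GradedAlgebra ℬ]
    (ru rv : ℕ) (hU : IsGradedArtinian U 𝒜 ru) (hV : IsGradedArtinian V ℬ rv)
    (μ : U) (ν : V)
    (hμ : IsLefschetzElem 𝒜 ru μ) (hν : IsLefschetzElem ℬ rv ν) :
    IsLefschetzElem (tensorGrading 𝒜 ℬ) (ru + rv) (μ ⊗ₜ[ℝ] 1 + 1 ⊗ₜ[ℝ] ν) := by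
  obtain ⟨hUfin, -, -, hUtop⟩ := hU
  obtain ⟨hVfin, -, -, hVtop⟩ := hV
  obtain ⟨F₁, h₁⟩ := hμ.exists_isGradedSl2Pair hUtop
  obtain ⟨F₂, h₂⟩ := hν.exists_isGradedSl2Pair hVtop
  have h := h₁.tensor h₂
  rw [← Algebra.TensorProduct.mulLeft_tmul_one_add_one_tmul] at h
  refine h.isLefschetzElem (add_mem ?_ ?_)
  · simpa using tmul_mem_tensorGrading (ℬ := ℬ) hμ.1 (SetLike.one_mem_graded ℬ)
  · simpa using tmul_mem_tensorGrading (SetLike.one_mem_graded 𝒜) hν.1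
end

section
/- Let G be a finite directed acyclic graph with positive real edge weights, and let V_i = {u_1,…,u_N}, V_{r-i} = {v_1,…,v_N} be two sets of N vertices each. Define the path matrix C with C_{jk} = sum of products of edge weights over all directed paths from u_k to v_j. Then det(C) equals the signed sum over vertex-disjoint path systems: det(C) = Σ_{P vertex-disjoint} sgn(σ_P)·ω(P), where a path system consists of a permutation σ and paths P_a : u_a → v_{σ(a)}, vertex-disjoint meaning no two paths share a vertex, and ω(P) is the product of all edge weights used. -/
/-
Expanding the determinant by the Leibniz formula gives the signed weighted sum over all path
systems `(σ, P)`. If some paths of a system meet, let `a` be the least index whose path meets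
another one, `x` the first vertex of that path lying on another path, and `b` the least other
index whose path passes through `x`; exchanging the tails after `x` of the paths from `u a` and
`u b` keeps the weight and flips the sign. Since paths in an acyclic graph repeat no vertex, the
new system has the same triple `(a, x, b)`, so this is an involution, and the intersecting
systems cancel in pairs.
-/

/-- A path in a directed graph `E` from `a` to `b`, recorded as the list `p` of
vertices following `a`; the empty list is the trivial path (requiring `a = b`). -/
def IsDiPath {V : Type*} (E : V → V → Prop) (a b : V) (p : List V) : Prop :=
  List.Chain E a p ∧ (a :: p).getLast (by simp) = b

/-- The weight of the path `a :: p`: the product of the weights of its edges. -/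
def pathWeight {V : Type*} (ω : V → V → ℝ) (a : V) (p : List V) : ℝ :=
  (((a :: p).zip p).map fun q => ω q.1 q.2).prod

open Equiv

theorem Set.Finite.setOf_perm_pi {n α : Type*} [Finite n] {S : n → n → Set α}
    (hS : ∀ j k, (S j k).Finite) :
    {P : Perm n × (n → α) | ∀ k, P.2 k ∈ S (P.1 k) k}.Finite := by
  refine (Set.finite_univ.prod (Set.Finite.pi (t := fun k => ⋃ j, S j k)
    fun k => Set.finite_iUnion fun j => hS j k)).subset ?_
  rintro ⟨σ, P⟩ hP
  exact ⟨trivial, fun k _ => Set.mem_iUnion.mpr ⟨σ k, hP k⟩⟩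

theorem Matrix.det_of_finsum_mem {n α R : Type*} [Fintype n] [DecidableEq n] [CommRing R]
    {S : n → n → Set α} (hS : ∀ j k, (S j k).Finite) (w : n → α → R) :
    (Matrix.of fun j k => ∑ᶠ p ∈ S j k, w k p).det =
      ∑ᶠ P ∈ {P : Perm n × (n → α) | ∀ k, P.2 k ∈ S (P.1 k) k},
        ((Perm.sign P.1 : ℤ) : R) * ∏ k, w k (P.2 k) := by
  rw [finsum_mem_eq_finite_toFinset_sum _ (Set.Finite.setOf_perm_pi hS),
    Finset.sum_finset_product _ Finset.univ
      (fun σ => Fintype.piFinset fun k => (hS (σ k) k).toFinset) (by simp), Matrix.det_apply]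
  refine Finset.sum_congr rfl fun σ _ => ?_
  have hentry : ∀ k, Matrix.of (fun j k => ∑ᶠ p ∈ S j k, w k p) (σ k) k =
      ∑ p ∈ (hS (σ k) k).toFinset, w k p := fun k => finsum_mem_eq_finite_toFinset_sum _ _
  rw [Finset.prod_congr rfl fun k _ => hentry k, Finset.prod_univ_sum, Units.smul_def,
    zsmul_eq_mul, Finset.mul_sum]

namespace List

variable {V : Type*} [DecidableEq V] {x y : V} {l l₁ l₂ : List V}

theorem head?_dropWhile_ne (hx : x ∈ l) : (l.dropWhile (· ≠ x)).head? = some x := by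
  induction l with
  | nil => simp at hx
  | cons c l ih =>
    by_cases hc : c = x
    · simp [hc]
    · simpa [dropWhile_cons, hc] using ih (by simpa [Ne.symm hc] using hx)

theorem dropWhile_ne_eq_cons (hx : x ∈ l) :
    l.dropWhile (· ≠ x) = x :: (l.dropWhile (· ≠ x)).tail :=
  (cons_head?_tail (head?_dropWhile_ne hx)).symm

theorem exists_mem_forall_mem_takeWhile_ne {p : V → Prop} (h : ∃ x ∈ l, p x) :
    ∃ x ∈ l, p x ∧ ∀ y ∈ l.takeWhile (· ≠ x), ¬ p y := by
  induction l with
  | nil => simp at h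
  | cons c l ih =>
    by_cases hc : p c
    · exact ⟨c, mem_cons_self, hc, by simp⟩
    · obtain ⟨x, hxl, hpx, hfirst⟩ := ih (by simpa [hc] using h)
      have hcx : c ≠ x := fun h => hc (h ▸ hpx)
      refine ⟨x, mem_cons_of_mem c hxl, hpx, ?_⟩
      simpa [takeWhile_cons, hcx, hc] using hfirst

theorem mem_takeWhile_ne_or_mem_takeWhile_ne (hx : x ∈ l) (hy : y ∈ l) (hxy : x ≠ y) :
    x ∈ l.takeWhile (· ≠ y) ∨ y ∈ l.takeWhile (· ≠ x) := by
  induction l with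
  | nil => simp at hx
  | cons c l ih =>
    by_cases hcx : c = x
    · subst hcx; simp [hxy]
    by_cases hcy : c = y
    · subst hcy; simp [Ne.symm hxy]
    have := ih (by simpa [Ne.symm hcx] using hx) (by simpa [Ne.symm hcy] using hy)
    simp only [takeWhile_cons, ne_eq, hcx, hcy, not_false_eq_true, decide_true]
    tauto

def splice (x : V) (l₁ l₂ : List V) : List V :=
  l₁.takeWhile (· ≠ x) ++ l₂.dropWhile (· ≠ x)

@[simp]
theorem splice_self (x : V) (l : List V) : splice x l l = l :=
  takeWhile_append_dropWhile

theorem mem_of_mem_splice (hy : y ∈ splice x l₁ l₂) : y ∈ l₁ ∨ y ∈ l₂ :=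
  (mem_append.mp hy).imp (fun h => takeWhile_subset _ h) (fun h => (dropWhile_sublist _).subset h)

theorem mem_splice (hx : x ∈ l₂) : x ∈ splice x l₁ l₂ :=
  mem_append_right _ (mem_of_mem_head? (head?_dropWhile_ne hx))

theorem takeWhile_ne_splice (hx : x ∈ l₂) :
    (splice x l₁ l₂).takeWhile (· ≠ x) = l₁.takeWhile (· ≠ x) := by
  rw [splice, takeWhile_append_of_pos (fun _ h => mem_takeWhile_imp h :), dropWhile_ne_eq_cons hx]
  simp

theorem dropWhile_ne_splice (hx : x ∈ l₂) :
    (splice x l₁ l₂).dropWhile (· ≠ x) = l₂.dropWhile (· ≠ x) := by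
  rw [splice, dropWhile_append_of_pos (fun _ h => mem_takeWhile_imp h :), dropWhile_ne_eq_cons hx]
  simp

theorem splice_splice (hx₁ : x ∈ l₁) (hx₂ : x ∈ l₂) :
    splice x (splice x l₁ l₂) (splice x l₂ l₁) = l₁ := by
  rw [splice, takeWhile_ne_splice hx₂, dropWhile_ne_splice hx₁, takeWhile_append_dropWhile]

theorem head?_splice (hx₁ : x ∈ l₁) (hx₂ : x ∈ l₂) : (splice x l₁ l₂).head? = l₁.head? := by
  conv_rhs => rw [← takeWhile_append_dropWhile (p := (· ≠ x)) (l := l₁)]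
  rw [splice, head?_append, head?_append, head?_dropWhile_ne hx₁, head?_dropWhile_ne hx₂]

theorem getLast?_splice (hx : x ∈ l₂) : (splice x l₁ l₂).getLast? = l₂.getLast? := by
  conv_rhs => rw [← takeWhile_append_dropWhile (p := (· ≠ x)) (l := l₂)]
  rw [splice, getLast?_append, getLast?_append, dropWhile_ne_eq_cons hx, getLast?_cons]
  rfl

theorem IsChain.splice {R : V → V → Prop} (h₁ : IsChain R l₁) (h₂ : IsChain R l₂)
    (hx₁ : x ∈ l₁) (hx₂ : x ∈ l₂) : IsChain R (splice x l₁ l₂) := by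
  rw [← takeWhile_append_dropWhile (p := (· ≠ x)) (l := l₁), isChain_append] at h₁
  rw [← takeWhile_append_dropWhile (p := (· ≠ x)) (l := l₂), isChain_append] at h₂
  refine isChain_append.mpr ⟨h₁.1, h₂.2.1, ?_⟩
  rw [head?_dropWhile_ne hx₂, ← head?_dropWhile_ne hx₁]
  exact h₁.2.2

end List

section Weight

variable {V M : Type*} [CommMonoid M] (ω : V → V → M)

def listWeight (l : List V) : M := ((l.zip l.tail).map fun q => ω q.1 q.2).prod

theorem listWeight_append_cons (x : V) :
    ∀ l₁ l₂ : List V,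
      listWeight ω (l₁ ++ x :: l₂) = listWeight ω (l₁ ++ [x]) * listWeight ω (x :: l₂)
  | [], _ => (one_mul _).symm
  | [a], _ => by simp [listWeight]
  | a :: b :: l₁, l₂ => by
    have ih := listWeight_append_cons x (b :: l₁) l₂
    simp only [listWeight, List.cons_append, List.tail_cons, List.zip_cons_cons, List.map_cons,
      List.prod_cons] at ih ⊢
    rw [ih, mul_assoc]

theorem listWeight_splice_mul_splice [DecidableEq V] {x : V} {l₁ l₂ : List V} (hx₁ : x ∈ l₁)
    (hx₂ : x ∈ l₂) :
    listWeight ω (l₁.splice x l₂) * listWeight ω (l₂.splice x l₁) =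
      listWeight ω l₁ * listWeight ω l₂ := by
  obtain ⟨t₁, ht₁⟩ : ∃ t, l₁.dropWhile (· ≠ x) = x :: t := ⟨_, List.dropWhile_ne_eq_cons hx₁⟩
  obtain ⟨t₂, ht₂⟩ : ∃ t, l₂.dropWhile (· ≠ x) = x :: t := ⟨_, List.dropWhile_ne_eq_cons hx₂⟩
  have e₁ : l₁ = l₁.takeWhile (· ≠ x) ++ x :: t₁ := by rw [← ht₁, List.takeWhile_append_dropWhile]
  have e₂ : l₂ = l₂.takeWhile (· ≠ x) ++ x :: t₂ := by rw [← ht₂, List.takeWhile_append_dropWhile]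
  conv_rhs => rw [e₁, e₂]
  simp only [List.splice, ht₁, ht₂]
  rw [listWeight_append_cons ω x _ t₁, listWeight_append_cons ω x _ t₂,
    listWeight_append_cons ω x _ t₁, listWeight_append_cons ω x _ t₂]
  ac_rfl

end Weight

theorem Equiv.swap_apply_eq_self_or_both {ι : Type*} [DecidableEq ι] {p : ι → Prop} {a b : ι}
    (ha : p a) (hb : p b) (c : ι) : swap a b c = c ∨ (p c ∧ p (swap a b c)) := by
  rcases eq_or_ne c a with rfl | hca
  · simp [ha, hb]
  rcases eq_or_ne c b with rfl | hcb
  · simp [ha, hb]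
  · exact .inl (swap_apply_of_ne_of_ne hca hcb)

section Crossing

variable {ι V : Type*} [LinearOrder ι] [DecidableEq V] {L : ι → List V} {a b c : ι} {x y : V}

def OnOther (L : ι → List V) (a : ι) (y : V) : Prop := ∃ b ≠ a, y ∈ L b

structure IsLeastCrossing (L : ι → List V) (a : ι) (x : V) (b : ι) : Prop where
  mem_left : x ∈ L a
  mem_right : x ∈ L b
  ne : b ≠ a
  not_onOther_of_lt : ∀ c < a, ∀ y ∈ L c, ¬ OnOther L c y
  not_onOther_of_mem_takeWhile : ∀ y ∈ (L a).takeWhile (· ≠ x), ¬ OnOther L a y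
  not_mem_of_lt : ∀ c < b, c ≠ a → x ∉ L c

theorem exists_isLeastCrossing [WellFoundedLT ι] (h : ∃ a, ∃ y ∈ L a, OnOther L a y) :
    ∃ a x b, IsLeastCrossing L a x b := by
  obtain ⟨a, ⟨y, hy, hya⟩, hamin⟩ := wellFounded_lt.has_min {a | ∃ y ∈ L a, OnOther L a y} h
  obtain ⟨x, hxa, hxo, hfirst⟩ := List.exists_mem_forall_mem_takeWhile_ne ⟨y, hy, hya⟩
  obtain ⟨b, ⟨hba, hxb⟩, hbmin⟩ := wellFounded_lt.has_min {b | b ≠ a ∧ x ∈ L b} hxo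
  exact ⟨a, x, b, hxa, hxb, hba, fun c hc y hy hyc => hamin c ⟨y, hy, hyc⟩ hc, hfirst,
    fun c hc hca hxc => hbmin c ⟨hca, hxc⟩ hc⟩

namespace IsLeastCrossing

theorem lt (h : IsLeastCrossing L a x b) : a < b :=
  lt_of_le_of_ne
    (not_lt.mp fun hba => h.not_onOther_of_lt b hba x h.mem_right ⟨a, h.ne.symm, h.mem_left⟩)
    h.ne.symm

theorem unique {a' b' : ι} {x' : V} (h : IsLeastCrossing L a x b)
    (h' : IsLeastCrossing L a' x' b') : a = a' ∧ x = x' ∧ b = b' := by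
  obtain rfl : a = a' := by
    by_contra hne
    rcases lt_or_gt_of_ne hne with hlt | hlt
    · exact h'.not_onOther_of_lt a hlt x h.mem_left ⟨b, h.ne, h.mem_right⟩
    · exact h.not_onOther_of_lt a' hlt x' h'.mem_left ⟨b', h'.ne, h'.mem_right⟩
  obtain rfl : x = x' := by
    by_contra hne
    rcases List.mem_takeWhile_ne_or_mem_takeWhile_ne h.mem_left h'.mem_left hne with hx | hx
    · exact h'.not_onOther_of_mem_takeWhile x hx ⟨b, h.ne, h.mem_right⟩
    · exact h.not_onOther_of_mem_takeWhile x' hx ⟨b', h'.ne, h'.mem_right⟩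
  refine ⟨rfl, rfl, ?_⟩
  by_contra hne
  rcases lt_or_gt_of_ne hne with hlt | hlt
  · exact h'.not_mem_of_lt b hlt h.ne h.mem_right
  · exact h.not_mem_of_lt b' hlt h'.ne h'.mem_right

end IsLeastCrossing

/-- For `c ∉ {a, b}` this is `L c`, by `List.splice_self`. -/
def swapTails (L : ι → List V) (a : ι) (x : V) (b : ι) (c : ι) : List V :=
  (L c).splice x (L (swap a b c))

theorem swapTails_of_ne (hca : c ≠ a) (hcb : c ≠ b) : swapTails L a x b c = L c := by
  simp [swapTails, swap_apply_of_ne_of_ne hca hcb]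

@[simp]
theorem swapTails_left : swapTails L a x b a = (L a).splice x (L b) := by
  simp [swapTails]

@[simp]
theorem swapTails_right : swapTails L a x b b = (L b).splice x (L a) := by
  simp [swapTails]

theorem head?_swapTails (hxa : x ∈ L a) (hxb : x ∈ L b) (c : ι) :
    (swapTails L a x b c).head? = (L c).head? := by
  rcases swap_apply_eq_self_or_both (p := (x ∈ L ·)) hxa hxb c with hc | ⟨hc, hc'⟩
  · simp [swapTails, hc]
  · exact List.head?_splice hc hc'

theorem getLast?_swapTails (hxa : x ∈ L a) (hxb : x ∈ L b) (c : ι) :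
    (swapTails L a x b c).getLast? = (L (swap a b c)).getLast? := by
  rcases swap_apply_eq_self_or_both (p := (x ∈ L ·)) hxa hxb c with hc | ⟨-, hc'⟩
  · simp [swapTails, hc]
  · exact List.getLast?_splice hc'

theorem isChain_swapTails {R : V → V → Prop} (hL : ∀ c, (L c).IsChain R) (hxa : x ∈ L a)
    (hxb : x ∈ L b) (c : ι) : (swapTails L a x b c).IsChain R := by
  rcases swap_apply_eq_self_or_both (p := (x ∈ L ·)) hxa hxb c with hc | ⟨hc, hc'⟩
  · simpa [swapTails, hc] using hL c
  · exact (hL c).splice (hL _) hc hc'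

theorem swapTails_swapTails (hxa : x ∈ L a) (hxb : x ∈ L b) :
    swapTails (swapTails L a x b) a x b = L := by
  funext c
  rcases swap_apply_eq_self_or_both (p := (x ∈ L ·)) hxa hxb c with hc | ⟨hc, hc'⟩
  · simp [swapTails, hc]
  · simp only [swapTails, swap_apply_self]
    exact List.splice_splice hc hc'

theorem onOther_of_onOther_swapTails (hca : c ≠ a) (hcb : c ≠ b)
    (h : OnOther (swapTails L a x b) c y) : OnOther L c y := by
  obtain ⟨d, hdc, hyd⟩ := h
  rcases List.mem_of_mem_splice hyd with hyd | hyd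
  · exact ⟨d, hdc, hyd⟩
  · refine ⟨swap a b d, fun h => hdc ?_, hyd⟩
    rw [swap_apply_eq_iff.mp h, swap_apply_of_ne_of_ne hca hcb]

theorem IsLeastCrossing.swapTails (h : IsLeastCrossing L a x b) (hnd : (L a).Nodup) :
    IsLeastCrossing (swapTails L a x b) a x b where
  mem_left := by
    rw [swapTails_left]; exact List.mem_splice h.mem_right
  mem_right := by
    rw [swapTails_right]; exact List.mem_splice h.mem_left
  ne := h.ne
  not_onOther_of_lt c hc y hy hyo := by
    have hcb : c ≠ b := (hc.trans h.lt).ne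
    rw [swapTails_of_ne hc.ne hcb] at hy
    exact h.not_onOther_of_lt c hc y hy (onOther_of_onOther_swapTails hc.ne hcb hyo)
  not_onOther_of_mem_takeWhile y hy := by
    rw [swapTails_left, List.takeWhile_ne_splice h.mem_right] at hy
    rintro ⟨d, hda, hyd⟩
    rcases eq_or_ne d b with rfl | hdb
    · rw [swapTails_right] at hyd
      rcases List.mem_append.mp hyd with hyd | hyd
      · exact h.not_onOther_of_mem_takeWhile y hy ⟨d, hda, List.takeWhile_subset _ hyd⟩
      · -- `y` would occur twice on the path `L a`
        rw [← List.takeWhile_append_dropWhile (p := (· ≠ x)) (l := L a)] at hnd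
        exact List.disjoint_of_nodup_append hnd hy hyd
    · rw [swapTails_of_ne hda hdb] at hyd
      exact h.not_onOther_of_mem_takeWhile y hy ⟨d, hda, hyd⟩
  not_mem_of_lt c hc hca := by
    rw [swapTails_of_ne hca hc.ne]; exact h.not_mem_of_lt c hc hca

theorem prod_listWeight_swapTails {M : Type*} [CommMonoid M] [Fintype ι] (ω : V → V → M)
    (hab : a ≠ b) (hxa : x ∈ L a) (hxb : x ∈ L b) :
    ∏ c, listWeight ω (swapTails L a x b c) = ∏ c, listWeight ω (L c) := by
  rw [← Finset.prod_mul_prod_compl {a, b}, ← Finset.prod_mul_prod_compl {a, b} (fun c => _),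
    Finset.prod_pair hab, Finset.prod_pair hab]
  congr 1
  · simpa [swapTails] using listWeight_splice_mul_splice ω hxa hxb
  · refine Finset.prod_congr rfl fun c hc => ?_
    simp only [Finset.mem_compl, Finset.mem_insert, Finset.mem_singleton, not_or] at hc
    rw [swapTails_of_ne hc.1 hc.2]

end Crossing

section Paths

variable {V : Type*} {E : V → V → Prop} {a b : V} {p : List V}

theorem isDiPath_iff : IsDiPath E a b p ↔ (a :: p).IsChain E ∧ (a :: p).getLast? = some b := by
  rw [IsDiPath, List.getLast?_eq_some_getLast (List.cons_ne_nil a p), Option.some_inj]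
  rfl

theorem List.IsChain.nodup_of_irreflexive_transGen {l : List V}
    (hacyc : Irreflexive (Relation.TransGen E)) (h : l.IsChain E) : l.Nodup := by
  have := List.isChain_iff_pairwise.mp (h.imp fun _ _ => Relation.TransGen.single)
  exact this.imp fun {x y} (hxy : Relation.TransGen E x y) (hxy' : x = y) => hacyc _ (hxy' ▸ hxy)

theorem finite_setOf_isDiPath [Fintype V] (hacyc : Irreflexive (Relation.TransGen E)) (a b : V) :
    {p : List V | IsDiPath E a b p}.Finite := by
  refine (List.finite_length_le V (Fintype.card V)).subset fun p hp => ?_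
  have := (hp.1.nodup_of_irreflexive_transGen hacyc).length_le_card
  simp only [List.length_cons] at this
  exact Nat.le_of_succ_le this

end Paths

section PathSystems

variable {ι V : Type*} {E : V → V → Prop} (u v : ι → V)

def pathSystems (E : V → V → Prop) : Set (Perm ι × (ι → List V)) :=
  {s | ∀ a, IsDiPath E (u a) (v (s.1 a)) (s.2 a)}

def disjointSystems : Set (Perm ι × (ι → List V)) :=
  {s | ∀ a b, a ≠ b → ∀ x, x ∈ u a :: s.2 a → x ∉ u b :: s.2 b}

def vertexList (s : Perm ι × (ι → List V)) (c : ι) : List V := u c :: s.2 c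

theorem finite_pathSystems [Finite ι] [Fintype V] (hacyc : Irreflexive (Relation.TransGen E)) :
    (pathSystems u v E).Finite :=
  Set.Finite.setOf_perm_pi fun j k => finite_setOf_isDiPath hacyc (u k) (v j)

variable [LinearOrder ι] [DecidableEq V] {s : Perm ι × (ι → List V)} {a b : ι} {x : V}

def swapTailsSystem (a : ι) (x : V) (b : ι) (s : Perm ι × (ι → List V)) :
    Perm ι × (ι → List V) :=
  (s.1 * swap a b, fun c => (swapTails (vertexList u s) a x b c).tail)

open Classical in
noncomputable def swapAtLeastCrossing (s : Perm ι × (ι → List V)) : Perm ι × (ι → List V) :=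
  if h : ∃ t : ι × V × ι, IsLeastCrossing (vertexList u s) t.1 t.2.1 t.2.2 then
    swapTailsSystem u h.choose.1 h.choose.2.1 h.choose.2.2 s
  else s

variable {u v}

theorem swapAtLeastCrossing_eq (h : IsLeastCrossing (vertexList u s) a x b) :
    swapAtLeastCrossing u s = swapTailsSystem u a x b s := by
  have hex : ∃ t : ι × V × ι, IsLeastCrossing (vertexList u s) t.1 t.2.1 t.2.2 :=
    ⟨(a, x, b), h⟩
  obtain ⟨ha, hx, hb⟩ := hex.choose_spec.unique h
  rw [swapAtLeastCrossing, dif_pos hex, ha, hx, hb]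

theorem cons_swapTailsSystem (hxa : x ∈ vertexList u s a) (hxb : x ∈ vertexList u s b) :
    vertexList u (swapTailsSystem u a x b s) =
      swapTails (vertexList u s) a x b :=
  funext fun c => List.cons_head?_tail (by simp [head?_swapTails hxa hxb, vertexList])

theorem swapTailsSystem_swapTailsSystem (hxa : x ∈ vertexList u s a) (hxb : x ∈ vertexList u s b) :
    swapTailsSystem u a x b (swapTailsSystem u a x b s) = s := by
  refine Prod.ext (by simp [swapTailsSystem, mul_assoc]) (funext fun c => ?_)
  change (swapTails (vertexList u (swapTailsSystem u a x b s)) a x b c).tail = s.2 c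
  rw [cons_swapTailsSystem hxa hxb, swapTails_swapTails hxa hxb]
  rfl

theorem swapTailsSystem_mem_pathSystems (hs : s ∈ pathSystems u v E) (hxa : x ∈ vertexList u s a)
    (hxb : x ∈ vertexList u s b) : swapTailsSystem u a x b s ∈ pathSystems u v E := by
  intro c
  rw [isDiPath_iff]
  change (vertexList u _ c).IsChain E ∧ (vertexList u _ c).getLast? = _
  rw [cons_swapTailsSystem hxa hxb]
  refine ⟨isChain_swapTails (fun c => (isDiPath_iff.mp (hs c)).1) hxa hxb c, ?_⟩
  rw [getLast?_swapTails hxa hxb]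
  exact (isDiPath_iff.mp (hs _)).2

theorem sign_mul_prod_pathWeight_swapTailsSystem [Fintype ι] (ω : V → V → ℝ) (hab : a ≠ b)
    (hxa : x ∈ vertexList u s a) (hxb : x ∈ vertexList u s b) :
    ((Perm.sign (swapTailsSystem u a x b s).1 : ℤ) : ℝ) *
        ∏ c, pathWeight ω (u c) ((swapTailsSystem u a x b s).2 c) =
      -(((Perm.sign s.1 : ℤ) : ℝ) * ∏ c, pathWeight ω (u c) (s.2 c)) := by
  change _ * ∏ c, listWeight ω (vertexList u _ c) = -(_ * ∏ c, listWeight ω (vertexList u s c))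
  rw [cons_swapTailsSystem hxa hxb, prod_listWeight_swapTails ω hab hxa hxb, swapTailsSystem,
    Perm.sign_mul, Perm.sign_swap hab]
  push_cast
  ring

theorem IsLeastCrossing.swapTailsSystem (h : IsLeastCrossing (vertexList u s) a x b)
    (hnd : (vertexList u s a).Nodup) :
    IsLeastCrossing (vertexList u (swapTailsSystem u a x b s)) a x b := by
  rw [cons_swapTailsSystem h.mem_left h.mem_right]
  exact h.swapTails hnd

variable [Fintype ι]

theorem exists_isLeastCrossing_of_not_mem_disjointSystems (hs : s ∉ disjointSystems u) :
    ∃ a x b, IsLeastCrossing (vertexList u s) a x b := by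
  simp only [disjointSystems, Set.mem_ofPred_eq, not_forall, not_not] at hs
  obtain ⟨a, b, hab, x, hxa, hxb⟩ := hs
  exact exists_isLeastCrossing ⟨a, x, hxa, b, hab.symm, hxb⟩

theorem swapAtLeastCrossing_mem (hacyc : Irreflexive (Relation.TransGen E))
    (hs : s ∈ pathSystems u v E \ disjointSystems u) :
    swapAtLeastCrossing u s ∈ pathSystems u v E \ disjointSystems u := by
  obtain ⟨a, x, b, h⟩ := exists_isLeastCrossing_of_not_mem_disjointSystems hs.2
  have h' := h.swapTailsSystem ((isDiPath_iff.mp (hs.1 a)).1.nodup_of_irreflexive_transGen hacyc)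
  rw [swapAtLeastCrossing_eq h]
  exact ⟨swapTailsSystem_mem_pathSystems hs.1 h.mem_left h.mem_right,
    fun hdisj => hdisj a b h.ne.symm x h'.mem_left h'.mem_right⟩

theorem swapAtLeastCrossing_swapAtLeastCrossing (hacyc : Irreflexive (Relation.TransGen E))
    (hs : s ∈ pathSystems u v E \ disjointSystems u) :
    swapAtLeastCrossing u (swapAtLeastCrossing u s) = s := by
  obtain ⟨a, x, b, h⟩ := exists_isLeastCrossing_of_not_mem_disjointSystems hs.2
  have h' := h.swapTailsSystem ((isDiPath_iff.mp (hs.1 a)).1.nodup_of_irreflexive_transGen hacyc)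
  rw [swapAtLeastCrossing_eq h, swapAtLeastCrossing_eq h',
    swapTailsSystem_swapTailsSystem h.mem_left h.mem_right]

theorem sign_mul_prod_pathWeight_swapAtLeastCrossing (ω : V → V → ℝ)
    (hs : s ∉ disjointSystems u) :
    ((Perm.sign (swapAtLeastCrossing u s).1 : ℤ) : ℝ) *
        ∏ c, pathWeight ω (u c) ((swapAtLeastCrossing u s).2 c) =
      -(((Perm.sign s.1 : ℤ) : ℝ) * ∏ c, pathWeight ω (u c) (s.2 c)) := by
  obtain ⟨a, x, b, h⟩ := exists_isLeastCrossing_of_not_mem_disjointSystems hs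
  rw [swapAtLeastCrossing_eq h]
  exact sign_mul_prod_pathWeight_swapTailsSystem ω h.ne.symm h.mem_left h.mem_right

theorem finsum_sign_mul_prod_pathWeight_diff_disjointSystems [Fintype V]
    (hacyc : Irreflexive (Relation.TransGen E)) (ω : V → V → ℝ) :
    ∑ᶠ s ∈ pathSystems u v E \ disjointSystems u,
      ((Perm.sign s.1 : ℤ) : ℝ) * ∏ c, pathWeight ω (u c) (s.2 c) = 0 := by
  have hfin := (finite_pathSystems u v hacyc).sdiff (t := disjointSystems u)
  rw [finsum_mem_eq_finite_toFinset_sum _ hfin]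
  refine Finset.sum_involution (fun s _ => swapAtLeastCrossing u s) (fun s hs => ?_)
    (fun s hs hne heq => hne ?_) (fun s hs => ?_) (fun s hs => ?_) <;>
    rw [Set.Finite.mem_toFinset] at hs
  · rw [sign_mul_prod_pathWeight_swapAtLeastCrossing ω hs.2, add_neg_cancel]
  · have := sign_mul_prod_pathWeight_swapAtLeastCrossing ω hs.2
    rw [heq] at this
    linarith
  · exact (Set.Finite.mem_toFinset hfin).mpr (swapAtLeastCrossing_mem hacyc hs)
  · exact swapAtLeastCrossing_swapAtLeastCrossing hacyc hs

end PathSystems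

theorem lindstrom_gessel_viennot_general {V : Type*} [Fintype V]
    (E : V → V → Prop) (hacyc : Irreflexive (Relation.TransGen E))
    (ω : V → V → ℝ)
    (N : ℕ) (u v : Fin N → V) :
    (Matrix.of fun j k : Fin N =>
        ∑ᶠ p ∈ {p : List V | IsDiPath E (u k) (v j) p}, pathWeight ω (u k) p).det =
      ∑ᶠ P ∈ {P : Equiv.Perm (Fin N) × (Fin N → List V) |
          (∀ a, IsDiPath E (u a) (v (P.1 a)) (P.2 a)) ∧
          ∀ a b, a ≠ b → ∀ x, x ∈ u a :: P.2 a → x ∉ u b :: P.2 b},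
        ((Equiv.Perm.sign P.1 : ℤ) : ℝ) * ∏ a, pathWeight ω (u a) (P.2 a) := by
  classical
  calc _ = ∑ᶠ s ∈ pathSystems u v E,
          ((Perm.sign s.1 : ℤ) : ℝ) * ∏ a, pathWeight ω (u a) (s.2 a) :=
        Matrix.det_of_finsum_mem (fun j k => finite_setOf_isDiPath hacyc (u k) (v j)) _
    _ = _ := by
      rw [← finsum_mem_inter_add_sdiff (disjointSystems u) (finite_pathSystems u v hacyc),
        finsum_sign_mul_prod_pathWeight_diff_disjointSystems hacyc ω, add_zero]
      rfl

/-- Lindström–Gessel–Viennot: for a finite directed acyclic graph with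
positive real edge weights and vertices u_1,…,u_N, v_1,…,v_N, the determinant of the
path matrix C, C_{jk} = Σ over paths P : u_k → v_j of ω(P), equals the signed sum over
vertex-disjoint path systems: det C = Σ_{P vertex-disjoint} sgn(σ_P)·ω(P). -/
theorem lindstrom_gessel_viennot {V : Type*} [Fintype V]
    (E : V → V → Prop) (hacyc : Irreflexive (Relation.TransGen E))
    (ω : V → V → ℝ) (hpos : ∀ a b, E a b → 0 < ω a b)
    (N : ℕ) (u v : Fin N → V) :
    (Matrix.of fun j k : Fin N =>
        ∑ᶠ p ∈ {p : List V | IsDiPath E (u k) (v j) p}, pathWeight ω (u k) p).det =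
      ∑ᶠ P ∈ {P : Equiv.Perm (Fin N) × (Fin N → List V) |
          (∀ a, IsDiPath E (u a) (v (P.1 a)) (P.2 a)) ∧
          ∀ a b, a ≠ b → ∀ x, x ∈ u a :: P.2 a → x ∉ u b :: P.2 b},
        ((Equiv.Perm.sign P.1 : ℤ) : ℝ) * ∏ a, pathWeight ω (u a) (P.2 a) :=
  lindstrom_gessel_viennot_general E hacyc ω N u v
end
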